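/- Define a : ℕ → ℝ by a = sup_{n≥0} 2^(-2^(3n)) χ_{[0, 2^(2^(3n)))} and a₀ : ℕ → ℝ by a₀ = sup_{n≥0} 2^(-2^(3(n+1))) χ_{[0, 2^(3n+2^(3n)))}. Then for every l ≥ 0, the pointwise inequality σ_{2^l} a₀ ≤ σ_{2^l}(sup_{0≤n<l} 2^(-2^(3(n+1))) χ_{[0, 2^(3n+2^(3n)))}) + a holds, where (σ_M z)(k) = z(⌊k/M⌋). -/

import Mathlib

/-- The dilation `(σ_M x)(k) = x(⌊k/M⌋)`. -/
def dil (M : ℕ) (x : ℕ → ℝ) (k : ℕ) : ℝ := x (k / M)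

/-- The sequence `a = sup_{n ≥ 0} 2^(-2^(3n)) χ_{[0, 2^(2^(3n)))}`. -/
noncomputable def seqA (k : ℕ) : ℝ :=
  ⨆ n : ℕ, if k < 2 ^ 2 ^ (3 * n) then ((2 : ℝ) ^ 2 ^ (3 * n))⁻¹ else 0

/-- The sequence `a₀ = sup_{n ≥ 0} 2^(-2^(3(n+1))) χ_{[0, 2^(3n + 2^(3n)))}`. -/
noncomputable def seqA0 (k : ℕ) : ℝ :=
  ⨆ n : ℕ, if k < 2 ^ (3 * n + 2 ^ (3 * n)) then ((2 : ℝ) ^ 2 ^ (3 * (n + 1)))⁻¹ else 0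

/-- The truncated sequence `sup_{0 ≤ n < l} 2^(-2^(3(n+1))) χ_{[0, 2^(3n + 2^(3n)))}`. -/
noncomputable def seqA0trunc (l : ℕ) (k : ℕ) : ℝ :=
  ⨆ n : ℕ, if n < l ∧ k < 2 ^ (3 * n + 2 ^ (3 * n)) then ((2 : ℝ) ^ 2 ^ (3 * (n + 1)))⁻¹ else 0

/-!
For `k / 2^l < 2^(3n + 2^(3n))` the `n`-th term of `a₀` is dominated by the truncated supremum
when `n < l`; when `n ≥ l` we have `k < 2^(3n + 2^(3n) + l) ≤ 2^(2^(3(n+1)))`, so the same value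
`2^(-2^(3(n+1)))` is the `(n+1)`-st term of `a` at `k`.
-/

open Set

section IteSupremum

variable {P : ℕ → Prop} [DecidablePred P] {c : ℕ → ℝ}

lemma bddAbove_range_ite (hc : BddAbove (range c)) :
    BddAbove (range fun n => if P n then c n else 0) := by
  obtain ⟨M, hM⟩ := hc
  refine ⟨max M 0, ?_⟩
  rintro _ ⟨n, rfl⟩
  dsimp only
  split
  · exact (hM ⟨n, rfl⟩).trans (le_max_left _ _)
  · exact le_max_right _ _

lemma le_iSup_ite (hc : BddAbove (range c)) {n : ℕ} (hn : P n) :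
    c n ≤ ⨆ m, if P m then c m else 0 := by
  simpa only [if_pos hn] using le_ciSup (bddAbove_range_ite (P := P) hc) n

lemma iSup_ite_nonneg (hc : ∀ n, 0 ≤ c n) : 0 ≤ ⨆ n, if P n then c n else 0 :=
  Real.iSup_nonneg fun n => by split <;> simp [hc]

end IteSupremum

lemma bddAbove_range_inv_two_pow (e : ℕ → ℕ) : BddAbove (range fun n => ((2 : ℝ) ^ e n)⁻¹) :=
  ⟨1, by rintro _ ⟨n, rfl⟩; exact inv_le_one_of_one_le₀ (one_le_pow₀ one_le_two)⟩

lemma seqA_nonneg (k : ℕ) : 0 ≤ seqA k :=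
  iSup_ite_nonneg fun _ => by positivity

lemma seqA0trunc_nonneg (l k : ℕ) : 0 ≤ seqA0trunc l k :=
  iSup_ite_nonneg fun _ => by positivity

lemma inv_two_pow_le_seqA {n k : ℕ} (hk : k < 2 ^ 2 ^ (3 * (n + 1))) :
    ((2 : ℝ) ^ 2 ^ (3 * (n + 1)))⁻¹ ≤ seqA k :=
  le_iSup_ite (c := fun n => ((2 : ℝ) ^ 2 ^ (3 * n))⁻¹)
    (bddAbove_range_inv_two_pow _) (n := n + 1) hk

lemma inv_two_pow_le_seqA0trunc {l n k : ℕ} (hn : n < l) (hk : k < 2 ^ (3 * n + 2 ^ (3 * n))) :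
    ((2 : ℝ) ^ 2 ^ (3 * (n + 1)))⁻¹ ≤ seqA0trunc l k :=
  le_iSup_ite (c := fun n => ((2 : ℝ) ^ 2 ^ (3 * (n + 1)))⁻¹)
    (bddAbove_range_inv_two_pow _) (P := fun n => n < l ∧ k < 2 ^ (3 * n + 2 ^ (3 * n))) ⟨hn, hk⟩

lemma three_mul_add_two_pow_add_le {l n : ℕ} (h : l ≤ n) :
    3 * n + 2 ^ (3 * n) + l ≤ 2 ^ (3 * (n + 1)) := by
  have hn : n < 2 ^ (3 * n) :=
    Nat.lt_two_pow_self.trans_le (Nat.pow_le_pow_right two_pos (by omega))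
  have h8 : 2 ^ (3 * (n + 1)) = 8 * 2 ^ (3 * n) := by
    rw [mul_add, pow_add]; ring
  omega

lemma lt_two_pow_add_of_div_two_pow_lt {k l m : ℕ} (h : k / 2 ^ l < 2 ^ m) : k < 2 ^ (m + l) := by
  rw [pow_add]
  exact (Nat.div_lt_iff_lt_mul (by positivity)).mp h

/-- For every `l ≥ 0`, `σ_{2^l} a₀ ≤ σ_{2^l}(sup_{0 ≤ n < l} 2^(-2^(3(n+1))) χ_{[0, 2^(3n+2^(3n)))}) + a`
pointwise. -/
theorem stmt_13 :
    ∀ l : ℕ, ∀ k : ℕ,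
      dil (2 ^ l) seqA0 k ≤ dil (2 ^ l) (seqA0trunc l) k + seqA k := by
  intro l k
  have hT := seqA0trunc_nonneg l (k / 2 ^ l)
  have hA := seqA_nonneg k
  refine ciSup_le fun n => ?_
  split_ifs with hc
  · rcases lt_or_ge n l with hnl | hln
    · exact le_add_of_le_of_nonneg (inv_two_pow_le_seqA0trunc hnl hc) hA
    · refine le_add_of_nonneg_of_le hT (inv_two_pow_le_seqA ?_)
      exact (lt_two_pow_add_of_div_two_pow_lt hc).trans_le
        (Nat.pow_le_pow_right two_pos (three_mul_add_two_pow_add_le hln))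
  · exact add_nonneg hT hA
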